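/- Fix α ∈ (0,1), s_in > 0, and a dilution rate d > 0 in the domain of ψα⁻¹, and define s* = φ⁻¹(d/(1−α)), v* = ρ⁻¹(d·μ⁻¹(d)), q* = μ⁻¹(d), and the coexistence algal biomass c* = (α·β·γ·(s_in − s*) − v*)/q*. Then c* > 0 if and only if ψα⁻¹(d) < s_in. -/

import Mathlib

/-- Inverse of the Monod bacterial growth rate: `φ⁻¹(y) = ks·y/(φmax − y)`. -/
noncomputable def phiInv (φmax ks y : ℝ) : ℝ := ks * y / (φmax - y)

/-- Inverse of the Droop algal growth rate: `μ⁻¹(d) = qmin·μmax/(μmax − d)`. -/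
noncomputable def muInv (μmax qmin d : ℝ) : ℝ := qmin * μmax / (μmax - d)

/-- Inverse of the vitamin uptake rate: `ρ⁻¹(w) = kv·w/(ρmax − w)`. -/
noncomputable def rhoInv (ρmax kv w : ℝ) : ℝ := kv * w / (ρmax - w)

/-- `ψα⁻¹(d) = φ⁻¹(d/(1−α)) + ρ⁻¹(d·μ⁻¹(d))/(α·β·γ)`. -/
noncomputable def psiInv (φmax ks ρmax kv μmax qmin β γ α d : ℝ) : ℝ :=
  phiInv φmax ks (d / (1 - α)) +
    rhoInv ρmax kv (d * muInv μmax qmin d) / (α * β * γ)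

/-- `d` is in the domain of `ψα⁻¹`: `d/(1−α) < φmax`, `d < μmax`, `d·μ⁻¹(d) < ρmax`. -/
def inDom (φmax ρmax μmax qmin α d : ℝ) : Prop :=
  d / (1 - α) < φmax ∧ d < μmax ∧ d * muInv μmax qmin d < ρmax

theorem muInv_pos {μmax qmin d : ℝ} (hμ : 0 < μmax) (hq : 0 < qmin) (hd : d < μmax) :
    0 < muInv μmax qmin d :=
  div_pos (mul_pos hq hμ) (sub_pos.mpr hd)

theorem div_pos_iff_add_div_lt {a q s v x : ℝ} (ha : 0 < a) (hq : 0 < q) :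
    0 < (a * (x - s) - v) / q ↔ s + v / a < x := by
  rw [div_pos_iff_of_pos_right hq, sub_pos, ← lt_sub_iff_add_lt', div_lt_iff₀' ha]

theorem cstar_pos_iff_general (φmax ks ρmax kv μmax qmin β γ : ℝ)
    (hμ : 0 < μmax) (hq : 0 < qmin) (hβ : 0 < β) (hγ : 0 < γ)
    (α : ℝ) (hα0 : 0 < α)
    (s_in : ℝ)
    (d : ℝ) (hdom : inDom φmax ρmax μmax qmin α d)
    (sstar vstar qstar cstar : ℝ)
    (hsstar : sstar = phiInv φmax ks (d / (1 - α)))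
    (hvstar : vstar = rhoInv ρmax kv (d * muInv μmax qmin d))
    (hqstar : qstar = muInv μmax qmin d)
    (hcstar : cstar = (α * β * γ * (s_in - sstar) - vstar) / qstar) :
    0 < cstar ↔ psiInv φmax ks ρmax kv μmax qmin β γ α d < s_in := by
  subst hsstar hvstar hqstar hcstar
  exact div_pos_iff_add_div_lt (by positivity) (muInv_pos hμ hq hdom.2.1)

/-- the coexistence algal biomass `c*` is positive if and only if
`ψα⁻¹(d) < s_in`. -/
theorem cstar_pos_iff (φmax ks ρmax kv μmax qmin β γ : ℝ)
    (hφ : 0 < φmax) (hks : 0 < ks) (hρ : 0 < ρmax) (hkv : 0 < kv)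
    (hμ : 0 < μmax) (hq : 0 < qmin) (hβ : 0 < β) (hγ : 0 < γ)
    (α : ℝ) (hα0 : 0 < α) (hα1 : α < 1)
    (s_in : ℝ) (hs : 0 < s_in)
    (d : ℝ) (hd : 0 < d) (hdom : inDom φmax ρmax μmax qmin α d)
    (sstar vstar qstar cstar : ℝ)
    (hsstar : sstar = phiInv φmax ks (d / (1 - α)))
    (hvstar : vstar = rhoInv ρmax kv (d * muInv μmax qmin d))
    (hqstar : qstar = muInv μmax qmin d)
    (hcstar : cstar = (α * β * γ * (s_in - sstar) - vstar) / qstar) :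
    0 < cstar ↔ psiInv φmax ks ρmax kv μmax qmin β γ α d < s_in :=
  cstar_pos_iff_general φmax ks ρmax kv μmax qmin β γ hμ hq hβ hγ α hα0 s_in d hdom sstar vstar
    qstar cstar hsstar hvstar hqstar hcstar
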